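/- Let k ≥ 1 be an integer and let K, K₁ ∈ ℝ with K ≤ K₁ and K₁ > 0. Let R₀ > 0 satisfy F_K(R₀) = F_{K₁}(π/(2√K₁)), where F_K(s) = ∫₀^s sn_K(r)^{k−1} dr, and let f : [0, R₀] → [0, π/(2√K₁)] be the comparison function defined by F_{K₁}(f(s)) = F_K(s). Then f(s) ≥ s for all s ∈ [0, R₀], and f′(s) ≥ 1 for all s ∈ (0, R₀). -/

import Mathlib

/-!
Let `τ = arcsn_{K₁} ∘ sn_K`, so that `sn_{K₁} (τ r) = sn_K r`. Since `cn² + K sn² = 1` and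
`K ≤ K₁`, its derivative `cn_K r / cn_{K₁} (τ r)` is at least `1`. Hence `r ≤ τ r`, which gives
`sn_{K₁} ≤ sn_K` and `F_{K₁} ≤ F_K` on `[0, π / (2√K₁)]`, whence `s ≤ f s`. Likewise
`F_K s ≤ F_{K₁} (τ s)`, so `F_{K₁} (f s) = F_K s` forces `f s ≤ τ s`, i.e.
`sn_{K₁} (f s) ≤ sn_K s`, and the ODE turns this into `1 ≤ f' s`. Where `√K₁ sn_K s ≥ 1`,
`τ s` is undefined, but then `sn_{K₁} ≤ 1 / √K₁ ≤ sn_K s` holds outright.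
-/

open Real Set

/-- The generalized sine function `sn_K` of the space form of curvature `K`. -/
noncomputable def sn (K r : ℝ) : ℝ :=
  if 0 < K then Real.sin (r * Real.sqrt K) / Real.sqrt K
  else if K = 0 then r
  else Real.sinh (r * Real.sqrt (-K)) / Real.sqrt (-K)

/-- `F_K(s) = ∫₀^s sn_K(r)^{k−1} dr`. -/
noncomputable def Fsn (K : ℝ) (k : ℕ) (s : ℝ) : ℝ :=
  ∫ r in (0 : ℝ)..s, sn K r ^ (k - 1)

noncomputable def cn (K r : ℝ) : ℝ :=
  if 0 < K then cos (r * √K) else if K = 0 then 1 else cosh (r * √(-K))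

theorem sn_of_pos {K : ℝ} (hK : 0 < K) (r : ℝ) : sn K r = sin (r * √K) / √K := if_pos hK

theorem sn_of_neg {K : ℝ} (hK : K < 0) (r : ℝ) : sn K r = sinh (r * √(-K)) / √(-K) := by
  rw [sn, if_neg hK.not_gt, if_neg hK.ne]

@[simp] theorem sn_zero_left (r : ℝ) : sn 0 r = r := by simp [sn]

@[simp] theorem sn_zero_right (K : ℝ) : sn K 0 = 0 := by simp [sn]

theorem hasDerivAt_sn (K r : ℝ) : HasDerivAt (sn K) (cn K r) r := by
  rcases lt_trichotomy K 0 with hK | rfl | hK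
  · have hc : √(-K) ≠ 0 := (sqrt_pos.2 (neg_pos.2 hK)).ne'
    rw [show sn K = fun r => sinh (r * √(-K)) / √(-K) from funext (sn_of_neg hK), cn,
      if_neg hK.not_gt, if_neg hK.ne]
    exact ((hasDerivAt_mul_const √(-K)).sinh.div_const √(-K)).congr_deriv (by field_simp)
  · simpa [cn, show sn 0 = id from funext sn_zero_left] using hasDerivAt_id r
  · have hc : √K ≠ 0 := (sqrt_pos.2 hK).ne'
    rw [show sn K = fun r => sin (r * √K) / √K from funext (sn_of_pos hK), cn, if_pos hK]
    exact ((hasDerivAt_mul_const √K).sin.div_const √K).congr_deriv (by field_simp)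

theorem continuous_sn (K : ℝ) : Continuous (sn K) :=
  continuous_iff_continuousAt.2 fun r => (hasDerivAt_sn K r).continuousAt

theorem cn_sq_add_mul_sn_sq (K r : ℝ) : cn K r ^ 2 + K * sn K r ^ 2 = 1 := by
  rcases lt_trichotomy K 0 with hK | rfl | hK
  · have hc : 0 < √(-K) := sqrt_pos.2 (neg_pos.2 hK)
    rw [sn_of_neg hK, cn, if_neg hK.not_gt, if_neg hK.ne, cosh_sq, div_pow,
      sq_sqrt (neg_pos.2 hK).le]
    field_simp [hK.ne]
    ring
  · simp [cn]
  · have hc : 0 < √K := sqrt_pos.2 hK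
    rw [sn_of_pos hK, cn, if_pos hK, div_pow, sq_sqrt hK.le]
    field_simp
    rw [cos_sq_add_sin_sq]

theorem cn_nonneg {K r : ℝ} (hr : 0 ≤ r) (hrK : r * √K ≤ π / 2) : 0 ≤ cn K r := by
  rw [cn]
  split_ifs with hK
  · exact cos_nonneg_of_mem_Icc ⟨by linarith [pi_pos, mul_nonneg hr (sqrt_nonneg K)], hrK⟩
  · exact zero_le_one
  · exact (cosh_pos _).le

theorem sn_pos {K r : ℝ} (hr : 0 < r) (hrK : r * √K < π) : 0 < sn K r := by
  rcases lt_trichotomy K 0 with hK | rfl | hK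
  · have hc : 0 < √(-K) := sqrt_pos.2 (neg_pos.2 hK)
    rw [sn_of_neg hK]
    exact div_pos (sinh_pos_iff.2 (mul_pos hr hc)) hc
  · simpa using hr
  · have hc : 0 < √K := sqrt_pos.2 hK
    rw [sn_of_pos hK]
    exact div_pos (sin_pos_of_pos_of_lt_pi (mul_pos hr hc) hrK) hc

theorem monotoneOn_sn {K a : ℝ} (ha : a * √K ≤ π / 2) : MonotoneOn (sn K) (Icc 0 a) := by
  refine monotoneOn_of_hasDerivWithinAt_nonneg (convex_Icc 0 a)
    (continuous_sn K).continuousOn (fun r _ => (hasDerivAt_sn K r).hasDerivWithinAt) ?_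
  rw [interior_Icc]
  exact fun r hr => cn_nonneg hr.1.le
    ((mul_le_mul_of_nonneg_right hr.2.le (sqrt_nonneg K)).trans ha)

theorem hasDerivAt_Fsn (K : ℝ) (k : ℕ) (s : ℝ) : HasDerivAt (Fsn K k) (sn K s ^ (k - 1)) s :=
  intervalIntegral.integral_hasDerivAt_right (((continuous_sn K).pow _).intervalIntegrable _ _)
    ((continuous_sn K).pow _).aestronglyMeasurable.stronglyMeasurableAtFilter
    ((continuous_sn K).pow _).continuousAt

theorem continuous_Fsn (K : ℝ) (k : ℕ) : Continuous (Fsn K k) :=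
  continuous_iff_continuousAt.2 fun s => (hasDerivAt_Fsn K k s).continuousAt

theorem strictMonoOn_Fsn {K a : ℝ} (k : ℕ) (ha : a * √K < π) :
    StrictMonoOn (Fsn K k) (Icc 0 a) := by
  refine strictMonoOn_of_hasDerivWithinAt_pos (convex_Icc 0 a) (continuous_Fsn K k).continuousOn
    (fun s _ => (hasDerivAt_Fsn K k s).hasDerivWithinAt) ?_
  rw [interior_Icc]
  exact fun r hr => pow_pos
    (sn_pos hr.1 ((mul_le_mul_of_nonneg_right hr.2.le (sqrt_nonneg K)).trans_lt ha)) _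

noncomputable def arcsn (K y : ℝ) : ℝ := arcsin (√K * y) / √K

theorem continuous_arcsn (K : ℝ) : Continuous (arcsn K) :=
  (continuous_arcsin.comp (continuous_const.mul continuous_id)).div_const _

section arcsn

variable {K y : ℝ}

theorem sn_arcsn (hK : 0 < K) (hy₀ : -1 ≤ √K * y) (hy₁ : √K * y ≤ 1) : sn K (arcsn K y) = y := by
  have hc : √K ≠ 0 := (sqrt_pos.2 hK).ne'
  rw [sn_of_pos hK, arcsn, div_mul_cancel₀ _ hc, sin_arcsin hy₀ hy₁, mul_div_cancel_left₀ _ hc]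

theorem arcsn_mem_Icc (hK : 0 < K) (hy : 0 ≤ y) : arcsn K y ∈ Icc 0 (π / (2 * √K)) := by
  have hc : 0 < √K := sqrt_pos.2 hK
  refine ⟨div_nonneg (arcsin_nonneg.2 (mul_nonneg hc.le hy)) hc.le, ?_⟩
  rw [arcsn, mul_comm, ← div_div]
  exact div_le_div_of_nonneg_right (arcsin_le_pi_div_two _) hc.le

theorem hasDerivAt_arcsn (hK : 0 < K) (hy₀ : -1 < √K * y) (hy₁ : √K * y < 1) :
    HasDerivAt (arcsn K) (1 / √(1 - K * y ^ 2)) y := by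
  have hc : √K ≠ 0 := (sqrt_pos.2 hK).ne'
  refine (((hasDerivAt_arcsin hy₀.ne' hy₁.ne).comp y (hasDerivAt_const_mul √K)).div_const
    √K).congr_deriv ?_
  rw [mul_pow, sq_sqrt hK.le, mul_div_cancel_right₀ _ hc]

theorem sqrt_mul_sn_le_one (hK : 0 < K) (x : ℝ) : √K * sn K x ≤ 1 := by
  rw [sn_of_pos hK, mul_div_cancel₀ _ (sqrt_pos.2 hK).ne']
  exact sin_le_one _

end arcsn

section comparison

variable {K K₁ : ℝ}

theorem quarter_mul_sqrt (hK₁ : 0 < K₁) : π / (2 * √K₁) * √K₁ = π / 2 := by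
  field_simp [(sqrt_pos.2 hK₁).ne']

theorem mul_sqrt_le_of_mem_Icc (hKK : K ≤ K₁) (hK₁ : 0 < K₁) {x : ℝ}
    (hx : x ∈ Icc 0 (π / (2 * √K₁))) : x * √K ≤ π / 2 :=
  calc x * √K ≤ π / (2 * √K₁) * √K₁ :=
        mul_le_mul hx.2 (sqrt_le_sqrt hKK) (sqrt_nonneg K) (hx.1.trans hx.2)
    _ = π / 2 := quarter_mul_sqrt hK₁

theorem sn_mem_Icc_of_mem_Icc (hKK : K ≤ K₁) (hK₁ : 0 < K₁) {s r : ℝ}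
    (hs : s ∈ Icc 0 (π / (2 * √K₁))) (hr : r ∈ Icc 0 s) : sn K r ∈ Icc 0 (sn K s) := by
  have hmono := monotoneOn_sn (mul_sqrt_le_of_mem_Icc hKK hK₁ hs)
  exact ⟨by simpa using hmono (left_mem_Icc.2 hs.1) hr hr.1, hmono hr ⟨hs.1, le_rfl⟩ hr.2⟩

theorem one_le_cn_div_sqrt (hKK : K ≤ K₁) {r : ℝ} (hcn : 0 ≤ cn K r)
    (h : K₁ * sn K r ^ 2 < 1) : 1 ≤ cn K r / √(1 - K₁ * sn K r ^ 2) := by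
  rw [one_le_div (sqrt_pos.2 (by linarith))]
  calc √(1 - K₁ * sn K r ^ 2) ≤ √(1 - K * sn K r ^ 2) :=
        sqrt_le_sqrt (by nlinarith [sq_nonneg (sn K r)])
    _ = cn K r := by rw [← cn_sq_add_mul_sn_sq K r, add_sub_cancel_right, sqrt_sq hcn]

theorem sqrt_mul_sn_mem_Ico (hKK : K ≤ K₁) (hK₁ : 0 < K₁) {s r : ℝ}
    (hs : s ∈ Icc 0 (π / (2 * √K₁))) (hsn : √K₁ * sn K s < 1) (hr : r ∈ Icc 0 s) :
    √K₁ * sn K r ∈ Ico 0 1 := by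
  obtain ⟨h₀, h₁⟩ := sn_mem_Icc_of_mem_Icc hKK hK₁ hs hr
  exact ⟨mul_nonneg (sqrt_nonneg K₁) h₀,
    (mul_le_mul_of_nonneg_left h₁ (sqrt_nonneg K₁)).trans_lt hsn⟩

theorem exists_hasDerivAt_arcsn_sn (hKK : K ≤ K₁) (hK₁ : 0 < K₁) {s r : ℝ}
    (hs : s ∈ Icc 0 (π / (2 * √K₁))) (hsn : √K₁ * sn K s < 1) (hr : r ∈ Icc 0 s) :
    ∃ d, HasDerivAt (fun r => arcsn K₁ (sn K r)) d r ∧ 1 ≤ d := by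
  obtain ⟨hy₀, hy₁⟩ := sqrt_mul_sn_mem_Ico hKK hK₁ hs hsn hr
  have hsq : K₁ * sn K r ^ 2 < 1 := by
    rw [← sq_sqrt hK₁.le, ← mul_pow]
    nlinarith
  refine ⟨_, (hasDerivAt_arcsn hK₁ (by linarith) hy₁).comp r (hasDerivAt_sn K r), ?_⟩
  rw [one_div_mul_eq_div]
  exact one_le_cn_div_sqrt hKK (cn_nonneg hr.1
    (mul_sqrt_le_of_mem_Icc hKK hK₁ ⟨hr.1, hr.2.trans hs.2⟩)) hsq

theorem le_arcsn_sn (hKK : K ≤ K₁) (hK₁ : 0 < K₁) {s : ℝ}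
    (hs : s ∈ Icc 0 (π / (2 * √K₁))) (hsn : √K₁ * sn K s < 1) : s ≤ arcsn K₁ (sn K s) := by
  choose! d hd h1 using fun r (hr : r ∈ Ico 0 s) =>
    exists_hasDerivAt_arcsn_sn hKK hK₁ hs hsn (Ico_subset_Icc_self hr)
  refine image_le_of_deriv_right_le_deriv_boundary continuousOn_id
    (fun r _ => (hasDerivAt_id r).hasDerivWithinAt) (by simp [arcsn])
    ((continuous_arcsn K₁).comp (continuous_sn K)).continuousOn
    (fun r hr => (hd r hr).hasDerivWithinAt) h1 ⟨hs.1, le_rfl⟩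

theorem Fsn_le_Fsn_arcsn_sn (hKK : K ≤ K₁) (hK₁ : 0 < K₁) (k : ℕ) {s : ℝ}
    (hs : s ∈ Icc 0 (π / (2 * √K₁))) (hsn : √K₁ * sn K s < 1) :
    Fsn K k s ≤ Fsn K₁ k (arcsn K₁ (sn K s)) := by
  choose! d hd h1 using fun r (hr : r ∈ Ico 0 s) =>
    exists_hasDerivAt_arcsn_sn hKK hK₁ hs hsn (Ico_subset_Icc_self hr)
  have hsn_arcsn : ∀ r ∈ Ico 0 s, sn K₁ (arcsn K₁ (sn K r)) = sn K r := fun r hr =>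
    have hy := sqrt_mul_sn_mem_Ico hKK hK₁ hs hsn (Ico_subset_Icc_self hr)
    sn_arcsn hK₁ (by linarith [hy.1]) hy.2.le
  refine image_le_of_deriv_right_le_deriv_boundary (continuous_Fsn K k).continuousOn
    (fun r _ => (hasDerivAt_Fsn K k r).hasDerivWithinAt) (by simp [arcsn, Fsn])
    ((continuous_Fsn K₁ k).comp ((continuous_arcsn K₁).comp (continuous_sn K))).continuousOn
    (fun r hr => ((hasDerivAt_Fsn K₁ k _).comp r (hd r hr)).hasDerivWithinAt) ?_ ⟨hs.1, le_rfl⟩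
  intro r hr
  rw [hsn_arcsn r hr]
  exact le_mul_of_one_le_right
    (pow_nonneg (sn_mem_Icc_of_mem_Icc hKK hK₁ hs (Ico_subset_Icc_self hr)).1 _) (h1 r hr)

theorem strictMonoOn_Fsn_quarter (hK₁ : 0 < K₁) (k : ℕ) :
    StrictMonoOn (Fsn K₁ k) (Icc 0 (π / (2 * √K₁))) :=
  strictMonoOn_Fsn k ((quarter_mul_sqrt hK₁).trans_lt (by linarith [pi_pos]))

theorem sn_pos_of_mem_Ioc (hK₁ : 0 < K₁) {x : ℝ} (hx : x ∈ Ioc 0 (π / (2 * √K₁))) :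
    0 < sn K₁ x :=
  sn_pos hx.1 ((mul_le_mul_of_nonneg_right hx.2 (sqrt_nonneg K₁)).trans_lt
    ((quarter_mul_sqrt hK₁).trans_lt (by linarith [pi_pos])))

theorem sn_le_of_one_le_sqrt_mul (hK₁ : 0 < K₁) {x y : ℝ} (hy : 1 ≤ √K₁ * y) : sn K₁ x ≤ y :=
  le_of_mul_le_mul_left ((sqrt_mul_sn_le_one hK₁ x).trans hy) (sqrt_pos.2 hK₁)

theorem sn_le_sn_of_le_arcsn_sn (hKK : K ≤ K₁) (hK₁ : 0 < K₁) {s x : ℝ}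
    (hs : s ∈ Icc 0 (π / (2 * √K₁))) (hsn : √K₁ * sn K s < 1)
    (hx : x ∈ Icc 0 (π / (2 * √K₁))) (hxs : x ≤ arcsn K₁ (sn K s)) : sn K₁ x ≤ sn K s := by
  have hy := sqrt_mul_sn_mem_Ico hKK hK₁ hs hsn ⟨hs.1, le_rfl⟩
  calc sn K₁ x ≤ sn K₁ (arcsn K₁ (sn K s)) :=
        monotoneOn_sn (quarter_mul_sqrt hK₁).le hx
          (arcsn_mem_Icc hK₁ (sn_mem_Icc_of_mem_Icc hKK hK₁ hs ⟨hs.1, le_rfl⟩).1) hxs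
    _ = sn K s := sn_arcsn hK₁ (by linarith [hy.1]) hy.2.le

theorem sn_le_sn (hKK : K ≤ K₁) (hK₁ : 0 < K₁) {r : ℝ} (hr : r ∈ Icc 0 (π / (2 * √K₁))) :
    sn K₁ r ≤ sn K r := by
  by_cases hsn : √K₁ * sn K r < 1
  · exact sn_le_sn_of_le_arcsn_sn hKK hK₁ hr hsn hr (le_arcsn_sn hKK hK₁ hr hsn)
  · exact sn_le_of_one_le_sqrt_mul hK₁ (not_lt.1 hsn)

theorem sn_le_sn_of_Fsn_le (hKK : K ≤ K₁) (hK₁ : 0 < K₁) {k : ℕ} {x s : ℝ}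
    (hx : x ∈ Icc 0 (π / (2 * √K₁))) (hs : s ∈ Icc 0 (π / (2 * √K₁)))
    (hF : Fsn K₁ k x ≤ Fsn K k s) : sn K₁ x ≤ sn K s := by
  by_cases hsn : √K₁ * sn K s < 1
  · refine sn_le_sn_of_le_arcsn_sn hKK hK₁ hs hsn hx ?_
    refine ((strictMonoOn_Fsn_quarter hK₁ k).le_iff_le hx
      (arcsn_mem_Icc hK₁ (sn_mem_Icc_of_mem_Icc hKK hK₁ hs ⟨hs.1, le_rfl⟩).1)).1 ?_
    exact hF.trans (Fsn_le_Fsn_arcsn_sn hKK hK₁ k hs hsn)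
  · exact sn_le_of_one_le_sqrt_mul hK₁ (not_lt.1 hsn)

theorem Fsn_le_Fsn (hKK : K ≤ K₁) (hK₁ : 0 < K₁) (k : ℕ) {s : ℝ}
    (hs : s ∈ Icc 0 (π / (2 * √K₁))) : Fsn K₁ k s ≤ Fsn K k s := by
  refine intervalIntegral.integral_mono_on hs.1 (((continuous_sn K₁).pow _).intervalIntegrable _ _)
    (((continuous_sn K).pow _).intervalIntegrable _ _) fun r hr => ?_
  have hr' : r ∈ Icc 0 (π / (2 * √K₁)) := ⟨hr.1, hr.2.trans hs.2⟩
  exact pow_le_pow_left₀ (sn_mem_Icc_of_mem_Icc le_rfl hK₁ hr' ⟨hr.1, le_rfl⟩).1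
    (sn_le_sn hKK hK₁ hr') _

theorem Fsn_lt_Fsn_of_quarter_lt (hKK : K ≤ K₁) (hK₁ : 0 < K₁) (k : ℕ) {x s : ℝ}
    (hx : x ∈ Icc 0 (π / (2 * √K₁))) (hs : π / (2 * √K₁) < s) (hsπ : s * √K₁ < π) :
    Fsn K₁ k x < Fsn K k s := by
  have hM : π / (2 * √K₁) ∈ Icc 0 (π / (2 * √K₁)) := ⟨hx.1.trans hx.2, le_rfl⟩
  calc Fsn K₁ k x ≤ Fsn K₁ k (π / (2 * √K₁)) :=
        (strictMonoOn_Fsn_quarter hK₁ k).monotoneOn hx hM hx.2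
    _ ≤ Fsn K k (π / (2 * √K₁)) := Fsn_le_Fsn hKK hK₁ k hM
    _ < Fsn K k s := (strictMonoOn_Fsn k ((mul_le_mul_of_nonneg_left (sqrt_le_sqrt hKK)
          (hM.1.trans hs.le)).trans_lt hsπ)) ⟨hM.1, hs.le⟩ ⟨hM.1.trans hs.le, le_rfl⟩ hs

end comparison

theorem comparison_function_expands_general (k : ℕ) (K K₁ : ℝ)
    (hKK : K ≤ K₁) (hK₁ : 0 < K₁) (R₀ : ℝ)
    (f f' : ℝ → ℝ)
    (hfmem : ∀ s ∈ Icc (0 : ℝ) R₀,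
      f s ∈ Icc (0 : ℝ) (Real.pi / (2 * Real.sqrt K₁)))
    (hfeq : ∀ s ∈ Icc (0 : ℝ) R₀, Fsn K₁ k (f s) = Fsn K k s)
    (hfode : ∀ s ∈ Ioo (0 : ℝ) R₀,
      f' s * sn K₁ (f s) ^ (k - 1) = sn K s ^ (k - 1)) :
    (∀ s ∈ Icc (0 : ℝ) R₀, s ≤ f s) ∧ (∀ s ∈ Ioo (0 : ℝ) R₀, 1 ≤ f' s) := by
  have hM : 0 < π / (2 * √K₁) := by have := sqrt_pos.2 hK₁; positivity
  have hRM : R₀ ≤ π / (2 * √K₁) := by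
    -- past the quarter period, `F_K` exceeds every value of `F_{K₁}` on `[0, π / (2√K₁)]`
    by_contra! h
    set s₀ := min R₀ (3 / 2 * (π / (2 * √K₁)))
    have hs₀ : s₀ ∈ Icc 0 R₀ := ⟨le_min (by linarith) (by positivity), min_le_left _ _⟩
    have hs₀π : s₀ * √K₁ < π :=
      calc s₀ * √K₁ ≤ 3 / 2 * (π / (2 * √K₁)) * √K₁ :=
            mul_le_mul_of_nonneg_right (min_le_right _ _) (sqrt_nonneg _)
        _ = 3 / 4 * π := by rw [mul_assoc, quarter_mul_sqrt hK₁]; ring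
        _ < π := by linarith [pi_pos]
    exact (Fsn_lt_Fsn_of_quarter_lt hKK hK₁ k (hfmem s₀ hs₀) (lt_min h (by linarith)) hs₀π).ne
      (hfeq s₀ hs₀)
  have hmem : ∀ s ∈ Icc 0 R₀, s ∈ Icc 0 (π / (2 * √K₁)) := fun s hs => ⟨hs.1, hs.2.trans hRM⟩
  have hle : ∀ s ∈ Icc 0 R₀, s ≤ f s := fun s hs =>
    ((strictMonoOn_Fsn_quarter hK₁ k).le_iff_le (hmem s hs) (hfmem s hs)).1
      ((Fsn_le_Fsn hKK hK₁ k (hmem s hs)).trans (hfeq s hs).ge)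
  refine ⟨hle, fun s hs => ?_⟩
  have hs' : s ∈ Icc 0 R₀ := Ioo_subset_Icc_self hs
  have hpos : 0 < sn K₁ (f s) :=
    sn_pos_of_mem_Ioc hK₁ ⟨hs.1.trans_le (hle s hs'), (hfmem s hs').2⟩
  have hpow := pow_le_pow_left₀ hpos.le
    (sn_le_sn_of_Fsn_le hKK hK₁ (hfmem s hs') (hmem s hs') (hfeq s hs').le) (k - 1)
  rw [← hfode s hs] at hpow
  exact le_of_mul_le_mul_right (by rwa [one_mul]) (pow_pos hpos _)

/-- The radial comparison function `f` between curvatures `K ≤ K₁` (with `K₁ > 0`),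
defined by `F_{K₁}(f(s)) = F_K(s)` and satisfying `f′(s)·sn_{K₁}(f(s))^{k−1} = sn_K(s)^{k−1}`,
satisfies `f(s) ≥ s` and `f′(s) ≥ 1`. -/
theorem comparison_function_expands (k : ℕ) (hk : 1 ≤ k) (K K₁ : ℝ)
    (hKK : K ≤ K₁) (hK₁ : 0 < K₁) (R₀ : ℝ) (hR₀ : 0 < R₀)
    (hF : Fsn K k R₀ = Fsn K₁ k (Real.pi / (2 * Real.sqrt K₁)))
    (f f' : ℝ → ℝ)
    (hfmem : ∀ s ∈ Icc (0 : ℝ) R₀,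
      f s ∈ Icc (0 : ℝ) (Real.pi / (2 * Real.sqrt K₁)))
    (hfeq : ∀ s ∈ Icc (0 : ℝ) R₀, Fsn K₁ k (f s) = Fsn K k s)
    (hfderiv : ∀ s ∈ Ioo (0 : ℝ) R₀, HasDerivAt f (f' s) s)
    (hfode : ∀ s ∈ Ioo (0 : ℝ) R₀,
      f' s * sn K₁ (f s) ^ (k - 1) = sn K s ^ (k - 1)) :
    (∀ s ∈ Icc (0 : ℝ) R₀, s ≤ f s) ∧ (∀ s ∈ Ioo (0 : ℝ) R₀, 1 ≤ f' s) :=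
  comparison_function_expands_general k K K₁ hKK hK₁ R₀ f f' hfmem hfeq hfode
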